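/- arXiv:1701.06393 — 2 statements merged into one kernel-verified Lean document; each statement's English description precedes it below -/
import Mathlib

section
/- Let p be a warping path of order m×n with embedding matrices Φ, Ψ, warping matrix W, and valence matrix V. Then W = Φᵀ Ψ and V = Φᵀ Φ. -/
open Matrix

/-- A warping path of order `m × n` with 1-indexed points. -/
def IsWarpingPath (m n : ℕ) (p : List (ℕ × ℕ)) : Prop :=
  p ≠ [] ∧
  p.head? = some (1, 1) ∧
  p.getLast? = some (m, n) ∧
  (∀ q ∈ p, 1 ≤ q.1 ∧ q.1 ≤ m ∧ 1 ≤ q.2 ∧ q.2 ≤ n) ∧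
  ∀ l, l + 1 < p.length →
    (p.getD (l + 1) (0, 0) = ((p.getD l (0, 0)).1 + 1, (p.getD l (0, 0)).2) ∨
     p.getD (l + 1) (0, 0) = ((p.getD l (0, 0)).1, (p.getD l (0, 0)).2 + 1) ∨
     p.getD (l + 1) (0, 0) = ((p.getD l (0, 0)).1 + 1, (p.getD l (0, 0)).2 + 1))

/-- Value of a time series `x ∈ ℝ^m` at the 1-indexed time point `i`. -/
def tsVal {m : ℕ} (x : Fin m → ℝ) (i : ℕ) : ℝ :=
  if h : i - 1 < m then x ⟨i - 1, h⟩ else 0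

/-- Cost of aligning `x` and `y` along warping path `p`. -/
def cost {m n : ℕ} (p : List (ℕ × ℕ)) (x : Fin m → ℝ) (y : Fin n → ℝ) : ℝ :=
  (p.map fun q => (tsVal x q.1 - tsVal y q.2) ^ 2).sum

/-- Squared DTW distance. -/
noncomputable def dtwSq (m n : ℕ) (x : Fin m → ℝ) (y : Fin n → ℝ) : ℝ :=
  sInf {c | ∃ p, IsWarpingPath m n p ∧ c = cost p x y}

/-- DTW distance. -/
noncomputable def dtw (m n : ℕ) (x : Fin m → ℝ) (y : Fin n → ℝ) : ℝ :=
  Real.sqrt (dtwSq m n x y)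

/-- Warping matrix of a warping path. -/
def warpMat (m n : ℕ) (p : List (ℕ × ℕ)) : Matrix (Fin m) (Fin n) ℝ :=
  fun i j => if ((i : ℕ) + 1, (j : ℕ) + 1) ∈ p then 1 else 0

/-- Valence matrix of a warping path. -/
def valMat (m n : ℕ) (p : List (ℕ × ℕ)) : Matrix (Fin m) (Fin m) ℝ :=
  Matrix.diagonal fun i => ∑ j, warpMat m n p i j

/-- First embedding matrix `Φ` induced by a warping path. -/
def embX (m : ℕ) (p : List (ℕ × ℕ)) : Matrix (Fin p.length) (Fin m) ℝ :=
  fun l i => if (p.get l).1 = (i : ℕ) + 1 then 1 else 0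

/-- Second embedding matrix `Ψ` induced by a warping path. -/
def embY (n : ℕ) (p : List (ℕ × ℕ)) : Matrix (Fin p.length) (Fin n) ℝ :=
  fun l j => if (p.get l).2 = (j : ℕ) + 1 then 1 else 0

/-- `W = Φᵀ Ψ` and `V = Φᵀ Φ`. -/
theorem warp_and_valence_from_embeddings (m n : ℕ) (p : List (ℕ × ℕ))
    (hp : IsWarpingPath m n p) :
    warpMat m n p = (embX m p)ᵀ * embY n p ∧
    valMat m n p = (embX m p)ᵀ * embX m p := by
  obtain ⟨hne, hhead, hlast, hbnd, hstep⟩ := hp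
  have hstep' : ∀ l, l + 1 < p.length →
      (p.getD l (0,0)).1 + (p.getD l (0,0)).2 <
      (p.getD (l+1) (0,0)).1 + (p.getD (l+1) (0,0)).2 := by
    intro l hl
    rcases hstep l hl with h | h | h <;> rw [h] <;> simp <;> omega
  have mono : ∀ b a, a < b → b < p.length →
      (p.getD a (0,0)).1 + (p.getD a (0,0)).2 <
      (p.getD b (0,0)).1 + (p.getD b (0,0)).2 := by
    intro b
    induction b with
    | zero => omega
    | succ b ih =>
      intro a hab hb
      rcases Nat.lt_succ_iff_lt_or_eq.mp hab with h | h
      · exact lt_trans (ih a h (by omega)) (hstep' b hb)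
      · rw [h]; exact hstep' b hb
  have e : ∀ c : Fin p.length, p.getD c (0,0) = p.get c := by
    intro c; rw [List.getD_eq_getElem _ _ c.isLt]; rfl
  have inj : Function.Injective p.get := by
    intro a b hab
    by_contra hne'
    rcases Nat.lt_or_ge a b with h | h
    · have := mono b a h b.isLt
      rw [e a, e b, hab] at this; omega
    · have h' : (b:ℕ) < a := lt_of_le_of_ne h (fun hh => hne' (Fin.ext hh.symm))
      have := mono a b h' a.isLt
      rw [e a, e b, hab] at this; omega
  have hmem : ∀ l : Fin p.length, p.get l ∈ p := fun l => by
    simpa using p.get_mem _ l.isLt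
  have key : ∀ q : ℕ × ℕ,
      (∑ l : Fin p.length, if p.get l = q then (1:ℝ) else 0) = if q ∈ p then 1 else 0 := by
    intro q
    by_cases hq : q ∈ p
    · obtain ⟨l₀, hl₀⟩ := List.mem_iff_get.mp hq
      have hcond : ∀ l : Fin p.length, (p.get l = q) ↔ (l = l₀) :=
        fun l => ⟨fun h => inj (h.trans hl₀.symm), fun h => h ▸ hl₀⟩
      simp only [hcond, if_pos hq, Finset.sum_ite_eq', Finset.mem_univ, if_true]
    · rw [if_neg hq]
      exact Finset.sum_eq_zero fun l _ => by
        rw [if_neg]; intro h; exact hq (h ▸ hmem l)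
  constructor
  · ext i j
    rw [Matrix.mul_apply]
    simp only [warpMat, Matrix.transpose_apply, embX, embY]
    have comb : ∀ l : Fin p.length,
        (if (p.get l).1 = (i:ℕ)+1 then (1:ℝ) else 0) *
        (if (p.get l).2 = (j:ℕ)+1 then (1:ℝ) else 0)
        = if p.get l = ((i:ℕ)+1, (j:ℕ)+1) then 1 else 0 := by
      intro l; split_ifs with h1 h2 h3 <;> simp_all [Prod.ext_iff]
    rw [Finset.sum_congr rfl fun l _ => comb l, key]
  · ext i i'
    rw [Matrix.mul_apply, valMat, Matrix.diagonal_apply]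
    simp only [Matrix.transpose_apply, embX]
    by_cases hii : i = i'
    · subst hii
      rw [if_pos rfl]
      have inner : ∀ l : Fin p.length,
          (if (p.get l).1 = (i:ℕ)+1 then (1:ℝ) else 0) =
          ∑ j : Fin n, if p.get l = ((i:ℕ)+1, (j:ℕ)+1) then 1 else 0 := by
        intro l
        by_cases h1 : (p.get l).1 = (i:ℕ)+1
        · rw [if_pos h1]
          obtain ⟨hb1, hb2, hb3, hb4⟩ := hbnd _ (hmem l)
          have hj : (p.get l).2 - 1 < n := by omega
          have hcond : ∀ j : Fin n,
              (p.get l = ((i:ℕ)+1, (j:ℕ)+1)) ↔ j = ⟨(p.get l).2 - 1, hj⟩ := by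
            intro j
            constructor
            · intro h
              have hs : (p.get l).2 = (j:ℕ)+1 := congrArg Prod.snd h
              exact Fin.ext (show (j:ℕ) = (p.get l).2 - 1 by omega)
            · rintro rfl
              refine Prod.ext_iff.mpr ⟨h1, ?_⟩
              show (p.get l).2 = (p.get l).2 - 1 + 1
              omega
          simp only [hcond, Finset.sum_ite_eq', Finset.mem_univ, if_true]
        · rw [if_neg h1]
          symm
          exact Finset.sum_eq_zero fun j _ => by
            rw [if_neg]; intro h; exact h1 (congrArg Prod.fst h)
      have sq : ∀ l : Fin p.length,
          (if (p.get l).1 = (i:ℕ)+1 then (1:ℝ) else 0) *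
          (if (p.get l).1 = (i:ℕ)+1 then (1:ℝ) else 0)
          = if (p.get l).1 = (i:ℕ)+1 then (1:ℝ) else 0 := by
        intro l; split_ifs <;> ring
      rw [Finset.sum_congr rfl fun l _ => sq l,
          Finset.sum_congr rfl fun l _ => inner l, Finset.sum_comm]
      simp only [warpMat]
      exact Finset.sum_congr rfl fun j _ => (key _).symm
    · rw [if_neg hii]
      symm
      apply Finset.sum_eq_zero
      intro l _
      split_ifs with h1 h2
      · exact absurd (Fin.ext (by omega)) hii
      all_goals ring
end

section
/- The gradient of the component function F_C at x ∈ ℝ^n equals (2/N) Σ_{k=1}^N (V^{(k)} x − W^{(k)} x^{(k)}), where V^{(k)} and W^{(k)} are the valence and warping matrices of the warping path p^{(k)} in configuration C. -/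
open Matrix

/-! Along a warping path the sum `i + j` of the cell indices strictly increases, so no cell is
visited twice and the cost is `∑ i j, W i j * (x i - y j) ^ 2`. Differentiating term by term,
coordinate `i` of the gradient is `2 * ∑ j, W i j * (x i - y j) = 2 * (V x - W y) i`. -/

theorem IsWarpingPath.nodup {m n : ℕ} {p : List (ℕ × ℕ)} (hp : IsWarpingPath m n p) :
    p.Nodup := by
  have hchain : (p.map fun q => q.1 + q.2).IsChain (· < ·) := by
    rw [List.isChain_map, List.isChain_iff_getElem]
    intro l hl
    have hstep := hp.2.2.2.2 l hl
    rw [List.getD_eq_getElem _ _ hl, List.getD_eq_getElem _ _ (by omega)] at hstep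
    rcases hstep with h | h | h <;> rw [h] <;> omega
  exact hchain.pairwise.nodup.of_map _

theorem cost_eq_sum_warpMat {m n : ℕ} {p : List (ℕ × ℕ)} (hp : IsWarpingPath m n p)
    (x : Fin m → ℝ) (y : Fin n → ℝ) :
    cost p x y = ∑ i, ∑ j, warpMat m n p i j * (x i - y j) ^ 2 := by
  classical
  rw [cost, ← List.sum_toFinset _ hp.nodup, ← Fintype.sum_prod_type']
  simp only [warpMat, ite_mul, one_mul, zero_mul]
  rw [← Finset.sum_filter]
  symm
  refine Finset.sum_bij (fun ij _ => ((ij.1 : ℕ) + 1, (ij.2 : ℕ) + 1)) ?_ ?_ ?_ ?_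
  · intro ij hij
    simpa using hij
  · intro a _ b _ hab
    simp only [Prod.mk.injEq, add_left_inj] at hab
    exact Prod.ext (Fin.ext hab.1) (Fin.ext hab.2)
  · intro q hq
    obtain ⟨h1, h2, h3, h4⟩ := hp.2.2.2.1 q (List.mem_toFinset.1 hq)
    refine ⟨(⟨q.1 - 1, by omega⟩, ⟨q.2 - 1, by omega⟩), ?_, ?_⟩
    · simp only [Finset.mem_filter, Finset.mem_univ, true_and]
      convert List.mem_toFinset.1 hq using 2 <;> omega
    · ext <;> simp only <;> omega
  · intro ij _
    simp [tsVal]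

section Gradient

variable {F : Type*} [NormedAddCommGroup F] [InnerProductSpace ℝ F] [CompleteSpace F]
  {x : F}

theorem HasGradientAt.const_mul {f : F → ℝ} {f' : F} (c : ℝ) (hf : HasGradientAt f f' x) :
    HasGradientAt (fun z => c * f z) (c • f') x := by
  rw [hasGradientAt_iff_hasFDerivAt] at hf ⊢
  simpa using hf.const_mul c

theorem HasGradientAt.fun_sum {ι : Type*} {s : Finset ι} {f : ι → F → ℝ} {f' : ι → F}
    (hf : ∀ i ∈ s, HasGradientAt (f i) (f' i) x) :
    HasGradientAt (fun z => ∑ i ∈ s, f i z) (∑ i ∈ s, f' i) x := by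
  simp only [hasGradientAt_iff_hasFDerivAt] at hf ⊢
  simpa using HasFDerivAt.fun_sum hf

end Gradient

theorem EuclideanSpace.hasGradientAt_sub_sq {ι : Type*} [Fintype ι] [DecidableEq ι] (i : ι)
    (c : ℝ) (x : EuclideanSpace ℝ ι) :
    HasGradientAt (fun z : EuclideanSpace ℝ ι => (z i - c) ^ 2)
      ((2 * (x i - c)) • EuclideanSpace.single i 1) x := by
  rw [hasGradientAt_iff_hasFDerivAt]
  refine ((EuclideanSpace.proj (𝕜 := ℝ) i).hasFDerivAt.sub_const c |>.pow 2).congr_fderiv ?_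
  ext v
  simp [EuclideanSpace.inner_single_left]

theorem Matrix.hasGradientAt_sum_mul_sub_sq {ι κ : Type*} [Fintype ι] [DecidableEq ι]
    [Fintype κ] (W : Matrix ι κ ℝ) (y : κ → ℝ) (x : EuclideanSpace ℝ ι) :
    HasGradientAt (fun z : EuclideanSpace ℝ ι => ∑ i, ∑ j, W i j * (z i - y j) ^ 2)
      ((2 : ℝ) • WithLp.toLp 2 ((diagonal fun i => ∑ j, W i j) *ᵥ x - W *ᵥ y)) x := by
  have h := HasGradientAt.fun_sum fun i (_ : i ∈ Finset.univ) =>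
    HasGradientAt.fun_sum fun j (_ : j ∈ Finset.univ) =>
      (EuclideanSpace.hasGradientAt_sub_sq i (y j) x).const_mul (W i j)
  convert h using 1
  ext k
  simp only [PiLp.smul_apply, Pi.sub_apply, mulVec_diagonal, WithLp.ofLp_sum,
    Finset.sum_apply, PiLp.single_apply, smul_eq_mul, mul_ite, mul_one, mul_zero]
  rw [Finset.sum_comm]
  simp only [Finset.sum_ite_eq, Finset.mem_univ, if_true, mulVec, dotProduct, Finset.sum_mul,
    ← Finset.sum_sub_distrib, Finset.mul_sum]
  exact Finset.sum_congr rfl fun j _ => by ring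

/-- the gradient of the component function `F_C` at `x` is
`(2/N) Σ_k (V^{(k)} x - W^{(k)} x^{(k)})`. -/
theorem component_function_gradient (n N : ℕ) (len : Fin N → ℕ)
    (X : (k : Fin N) → Fin (len k) → ℝ) (C : Fin N → List (ℕ × ℕ))
    (hC : ∀ k, IsWarpingPath n (len k) (C k)) (x : EuclideanSpace ℝ (Fin n)) :
    HasGradientAt
      (fun z : EuclideanSpace ℝ (Fin n) => (1 / N : ℝ) * ∑ k, cost (C k) z (X k))
      ((2 / N : ℝ) • (WithLp.toLp 2 (∑ k, ((valMat n (len k) (C k)).mulVec x -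
          (warpMat n (len k) (C k)).mulVec (X k))) : EuclideanSpace ℝ (Fin n))) x := by
  simp only [cost_eq_sum_warpMat (hC _)]
  have h := (HasGradientAt.fun_sum fun k (_ : k ∈ Finset.univ) =>
    (warpMat n (len k) (C k)).hasGradientAt_sum_mul_sub_sq (X k) x).const_mul (1 / N : ℝ)
  convert h using 1
  rw [WithLp.toLp_sum, Finset.smul_sum, Finset.smul_sum]
  refine Finset.sum_congr rfl fun k _ => ?_
  rw [smul_smul, valMat]
  ring_nf
end
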